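/- Let δ ∈ (0,1), r* > 0, and let f : [0, r*] → ℝ be continuously differentiable with f(0) = 0. Define g(r) = ∫₀^r f(s)^2 ds, and suppose a := sup_{r ∈ (0,r*)} g(r)/r and b := sup_{r ∈ (0,r*)} r^δ * |f'(r)| are finite. Then for all r ∈ [0, r*], |f(r)|^3 ≤ (3*a*b/(1-δ)) * r^(1-δ). -/

import Mathlib

/-!
Since `(f³)' = 3 f² f'` and `|f' x| ≤ b x^(-δ)`, for `0 < ε ≤ r` we get
`|f r ^ 3 - f ε ^ 3| ≤ 3 b ∫_ε^r x^(-δ) f²`. Integrating by parts against `G x = ∫_0^x f²`,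
which satisfies `0 ≤ G ≤ a x`, bounds this weighted integral by
`a r^(1-δ) + δ a ∫_ε^r x^(-δ) ≤ a r^(1-δ) / (1-δ)`. Letting `ε → 0` and using `f 0 = 0` gives the
estimate on `(0, r*)`, and continuity extends it to the closed interval.
-/

open Set MeasureTheory intervalIntegral

theorem hasDerivAt_integral_of_continuousOn {f : ℝ → ℝ} {c d x : ℝ}
    (hf : ContinuousOn f (Icc c d)) (hx : x ∈ Ioo c d) :
    HasDerivAt (fun t => ∫ s in c..t, f s) (f x) x :=
  integral_hasDerivAt_right
    ((hf.mono (Icc_subset_Icc_right hx.2.le)).intervalIntegrable_of_Icc hx.1.le)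
    ((hf.mono Ioo_subset_Icc_self).stronglyMeasurableAtFilter isOpen_Ioo x hx)
    (hf.continuousAt (Icc_mem_nhds hx.1 hx.2))

theorem integral_rpow_le_div_of_nonneg {p ε r : ℝ} (hp : -1 < p) (hε : 0 ≤ ε) :
    ∫ x in ε..r, x ^ p ≤ r ^ (p + 1) / (p + 1) := by
  rw [integral_rpow (Or.inl hp)]
  gcongr
  · linarith
  · exact sub_le_self _ (Real.rpow_nonneg hε _)

theorem abs_cube_sub_cube_le_integral {f f' w : ℝ → ℝ} {ε r : ℝ} (hεr : ε ≤ r)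
    (hf : ∀ x ∈ Icc ε r, HasDerivAt f (f' x) x) (hf' : ContinuousOn f' (Icc ε r))
    (hw : ContinuousOn w (Icc ε r)) (hfw : ∀ x ∈ Icc ε r, |f' x| ≤ w x) :
    |f r ^ 3 - f ε ^ 3| ≤ 3 * ∫ x in ε..r, w x * f x ^ 2 := by
  have hfc : ContinuousOn f (Icc ε r) := fun x hx => (hf x hx).continuousAt.continuousWithinAt
  have hcube : ∫ x in ε..r, 3 * f x ^ 2 * f' x = f r ^ 3 - f ε ^ 3 :=
    integral_eq_sub_of_hasDerivAt
      (fun x hx => by simpa using (hf x (by rwa [uIcc_of_le hεr] at hx)).pow 3)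
      (ContinuousOn.intervalIntegrable_of_Icc hεr (by fun_prop))
  rw [← hcube, ← Real.norm_eq_abs, ← intervalIntegral.integral_const_mul]
  refine norm_integral_le_of_norm_le hεr (ae_of_all _ fun x hx => ?_)
    (ContinuousOn.intervalIntegrable_of_Icc hεr (by fun_prop))
  have hx := hfw x (Ioc_subset_Icc_self hx)
  rw [Real.norm_eq_abs, abs_mul, abs_of_nonneg (by positivity : (0 : ℝ) ≤ 3 * f x ^ 2)]
  nlinarith [sq_nonneg (f x)]

theorem integral_rpow_neg_mul_deriv_le {δ a ε r : ℝ} {G g : ℝ → ℝ} (hδ0 : 0 ≤ δ) (hδ1 : δ < 1)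
    (hε : 0 < ε) (hεr : ε ≤ r) (hG : ∀ x ∈ Icc ε r, HasDerivAt G (g x) x)
    (hg : IntervalIntegrable g volume ε r) (hGε : 0 ≤ G ε) (hGa : ∀ x ∈ Icc ε r, G x ≤ a * x) :
    ∫ x in ε..r, x ^ (-δ) * g x ≤ a * r ^ (1 - δ) / (1 - δ) := by
  have hpos : ∀ x ∈ Icc ε r, 0 < x := fun x hx => hε.trans_le hx.1
  have ha : 0 ≤ a := nonneg_of_mul_nonneg_left (hGε.trans (hGa ε ⟨le_rfl, hεr⟩)) hε
  have hGc : ContinuousOn G (Icc ε r) := fun x hx => (hG x hx).continuousAt.continuousWithinAt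
  have hpow : ∀ q : ℝ, ContinuousOn (fun x : ℝ => x ^ q) (Icc ε r) := fun q x hx =>
    (Real.continuousAt_rpow_const x q (Or.inl (hpos x hx).ne')).continuousWithinAt
  rw [← uIcc_of_le hεr] at hG hpos
  have hibp := integral_mul_deriv_eq_deriv_mul
    (fun x hx => Real.hasDerivAt_rpow_const (p := -δ) (Or.inl (hpos x hx).ne')) hG
    (ContinuousOn.intervalIntegrable_of_Icc hεr (continuousOn_const.mul (hpow _))) hg
  have hbulk : ∫ x in ε..r, x ^ (-δ - 1) * G x ≤ a * (r ^ (1 - δ) / (1 - δ)) :=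
    calc ∫ x in ε..r, x ^ (-δ - 1) * G x ≤ ∫ x in ε..r, a * x ^ (-δ) := by
          refine integral_mono_on hεr
            (ContinuousOn.intervalIntegrable_of_Icc hεr ((hpow _).mul hGc))
            (ContinuousOn.intervalIntegrable_of_Icc hεr (continuousOn_const.mul (hpow _)))
            fun x hx => ?_
          have hx0 := hpos x (by rwa [uIcc_of_le hεr])
          calc x ^ (-δ - 1) * G x ≤ x ^ (-δ - 1) * (a * x) := by gcongr; exact hGa x hx
            _ = a * x ^ (-δ) := by rw [Real.rpow_sub_one hx0.ne']; field_simp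
      _ = a * ∫ x in ε..r, x ^ (-δ) := intervalIntegral.integral_const_mul _ _
      _ ≤ a * (r ^ (1 - δ) / (1 - δ)) := by
          gcongr
          simpa [neg_add_eq_sub] using
            integral_rpow_le_div_of_nonneg (r := r) (p := -δ) (by linarith) hε.le
  have hend : r ^ (-δ) * G r ≤ a * r ^ (1 - δ) := by
    have hr := hpos r right_mem_uIcc
    calc r ^ (-δ) * G r ≤ r ^ (-δ) * (a * r) := by gcongr; exact hGa r ⟨hεr, le_rfl⟩
      _ = a * r ^ (1 - δ) := by rw [sub_eq_neg_add, Real.rpow_add_one hr.ne']; ring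
  have hstart : 0 ≤ ε ^ (-δ) * G ε := mul_nonneg (Real.rpow_nonneg hε.le _) hGε
  have hsum : a * r ^ (1 - δ) + δ * (a * (r ^ (1 - δ) / (1 - δ))) = a * r ^ (1 - δ) / (1 - δ) := by
    field_simp [(sub_pos.2 hδ1).ne']
    ring
  simp only [hibp, mul_assoc, intervalIntegral.integral_const_mul]
  nlinarith [mul_le_mul_of_nonneg_left hbulk hδ0]

theorem abs_cube_le_add_of_weighted_bounds {δ a b R ε r : ℝ} {f f' : ℝ → ℝ} (hδ0 : 0 ≤ δ)
    (hδ1 : δ < 1) (hε : 0 < ε) (hεr : ε ≤ r) (hrR : r < R)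
    (hf : ∀ x ∈ Icc 0 R, HasDerivAt f (f' x) x) (hf' : ContinuousOn f' (Icc 0 R))
    (ha : ∀ x ∈ Ioo 0 R, ∫ s in 0..x, f s ^ 2 ≤ a * x)
    (hb : ∀ x ∈ Ioo 0 R, |f' x| ≤ b * x ^ (-δ)) :
    |f r| ^ 3 ≤ |f ε| ^ 3 + 3 * a * b / (1 - δ) * r ^ (1 - δ) := by
  have hsub : Icc ε r ⊆ Ioo 0 R := fun x hx => ⟨hε.trans_le hx.1, hx.2.trans_lt hrR⟩
  have hfc : ContinuousOn f (Icc 0 R) := fun x hx => (hf x hx).continuousAt.continuousWithinAt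
  have hb0 : 0 ≤ b := nonneg_of_mul_nonneg_left ((abs_nonneg _).trans (hb r (hsub ⟨hεr, le_rfl⟩)))
    (Real.rpow_pos_of_pos (hε.trans_le hεr) _)
  have hweight : ContinuousOn (fun x : ℝ => b * x ^ (-δ)) (Icc ε r) := fun x hx =>
    (continuousAt_const.mul (Real.continuousAt_rpow_const x _
      (Or.inl (hsub hx).1.ne'))).continuousWithinAt
  have hcube := abs_cube_sub_cube_le_integral hεr
    (fun x hx => hf x (Ioo_subset_Icc_self (hsub hx))) (hf'.mono (hsub.trans Ioo_subset_Icc_self))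
    hweight (fun x hx => hb x (hsub hx))
  have hintegral := integral_rpow_neg_mul_deriv_le hδ0 hδ1 hε hεr
    (fun x hx => hasDerivAt_integral_of_continuousOn (hfc.pow 2) (hsub hx))
    (ContinuousOn.intervalIntegrable_of_Icc hεr
      ((hfc.mono (hsub.trans Ioo_subset_Icc_self)).pow 2))
    (integral_nonneg hε.le fun _ _ => sq_nonneg _) (fun x hx => ha x (hsub hx))
  calc |f r| ^ 3 = |f ε| ^ 3 + (|f r| ^ 3 - |f ε| ^ 3) := by ring
    _ ≤ |f ε| ^ 3 + |f r ^ 3 - f ε ^ 3| := by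
        rw [← abs_pow, ← abs_pow]; gcongr; exact abs_sub_abs_le_abs_sub _ _
    _ ≤ |f ε| ^ 3 + 3 * ∫ x in ε..r, b * x ^ (-δ) * f x ^ 2 := by gcongr
    _ = |f ε| ^ 3 + 3 * b * ∫ x in ε..r, x ^ (-δ) * f x ^ 2 := by
        simp only [mul_assoc, intervalIntegral.integral_const_mul]
    _ ≤ |f ε| ^ 3 + 3 * b * (a * r ^ (1 - δ) / (1 - δ)) := by gcongr; exact hintegral
    _ = |f ε| ^ 3 + 3 * a * b / (1 - δ) * r ^ (1 - δ) := by ring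

theorem stmt_12 (δ rstar a b : ℝ) (hδ0 : 0 < δ) (hδ1 : δ < 1) (hr : 0 < rstar)
    (f f' : ℝ → ℝ) (hf0 : f 0 = 0)
    (hderiv : ∀ r ∈ Set.Icc (0 : ℝ) rstar, HasDerivAt f (f' r) r)
    (hf'cont : ContinuousOn f' (Set.Icc 0 rstar))
    (ha : ∀ r ∈ Set.Ioo (0 : ℝ) rstar, (∫ s in (0 : ℝ)..r, f s ^ 2) / r ≤ a)
    (hb : ∀ r ∈ Set.Ioo (0 : ℝ) rstar, r ^ δ * |f' r| ≤ b) :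
    ∀ r ∈ Set.Icc (0 : ℝ) rstar, |f r| ^ 3 ≤ (3 * a * b / (1 - δ)) * r ^ (1 - δ) := by
  have hG : ∀ x ∈ Ioo 0 rstar, ∫ s in 0..x, f s ^ 2 ≤ a * x := fun x hx =>
    (div_le_iff₀ hx.1).1 (ha x hx)
  have hf' : ∀ x ∈ Ioo 0 rstar, |f' x| ≤ b * x ^ (-δ) := fun x hx => by
    rw [Real.rpow_neg hx.1.le, ← div_eq_mul_inv, le_div_iff₀ (Real.rpow_pos_of_pos hx.1 δ),
      mul_comm]
    exact hb x hx
  have hfc : ContinuousOn f (Icc 0 rstar) := fun x hx =>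
    (hderiv x hx).continuousAt.continuousWithinAt
  set C := 3 * a * b / (1 - δ)
  have hinterior : ∀ r ∈ Ioo 0 rstar, |f r| ^ 3 ≤ C * r ^ (1 - δ) := fun r hr => by
    have hε : ∀ ε ∈ Ioo 0 r, |f r| ^ 3 ≤ |f ε| ^ 3 + C * r ^ (1 - δ) := fun ε hε =>
      abs_cube_le_add_of_weighted_bounds hδ0.le hδ1 hε.1 hε.2.le hr.2 hderiv hf'cont hG hf'
    have h0 := le_on_closure hε continuousOn_const
      (by rw [closure_Ioo hr.1.ne]
          exact ((hfc.mono (Icc_subset_Icc_right hr.2.le)).abs.pow 3).add continuousOn_const)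
      (by rw [closure_Ioo hr.1.ne]; exact left_mem_Icc.2 hr.1.le)
    rwa [hf0, abs_zero, zero_pow three_ne_zero, zero_add] at h0
  intro r hr'
  rw [← closure_Ioo hr.ne] at hr' hfc
  exact le_on_closure hinterior (hfc.abs.pow 3)
    (continuousOn_const.mul (Real.continuous_rpow_const (by linarith)).continuousOn) hr'
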